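/- arXiv:2111.07050 — 2 statements merged into one kernel-verified Lean document; each statement's English description precedes it below -/
import Mathlib

section
/- Let G be a d-connected graph and let D = E(X, X̄) be a nontrivial minimum edge cut of G, for some X ⊆ V(G). Then the number of vertices of X incident with an edge of D is at least d, and the number of vertices of V(G)∖X incident with an edge of D is at least d. -/
noncomputable section

/-- Abbreviation for Euclidean space `ℝ^n`. -/
abbrev Euc (n : ℕ) := EuclideanSpace ℝ (Fin n)

/-- A polytope is the convex hull of a finite set of points. -/
def IsPolytope {n : ℕ} (P : Set (Euc n)) : Prop :=
  ∃ S : Finset (Euc n), P = convexHull ℝ (S : Set (Euc n))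

/-- The dimension of a set of points: the dimension of its affine span. -/
noncomputable def polyDim {n : ℕ} (P : Set (Euc n)) : ℕ :=
  Module.finrank ℝ (affineSpan ℝ P).direction

/-- `F` is an (exposed) face of `P`: `P` itself, or the intersection of `P` with
a hyperplane that has `P` in one of its closed halfspaces. -/
def IsFaceOf {n : ℕ} (P F : Set (Euc n)) : Prop :=
  F = P ∨ ∃ (f : Euc n →ₗ[ℝ] ℝ) (c : ℝ), f ≠ 0 ∧ (∀ x ∈ P, f x ≤ c) ∧
    F = {x ∈ P | f x = c}

/-- A vertex of `P`: a point whose singleton is a (0-dimensional) face of `P`. -/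
def IsVertexOf {n : ℕ} (P : Set (Euc n)) (v : Euc n) : Prop :=
  IsFaceOf P {v}

/-- A facet of `P`: a nonempty face of dimension one less than that of `P`. -/
def IsFacetOf {n : ℕ} (P F : Set (Euc n)) : Prop :=
  IsFaceOf P F ∧ F.Nonempty ∧ polyDim F + 1 = polyDim P

/-- A simplicial `d`-polytope: a polytope of dimension `d` each of whose facets has
exactly `d` vertices. -/
def IsSimplicialPolytope {n : ℕ} (P : Set (Euc n)) (d : ℕ) : Prop :=
  IsPolytope P ∧ polyDim P = d ∧
    ∀ F, IsFacetOf P F → {v | IsVertexOf F v}.ncard = d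

/-- The graph of a polytope `P`: vertices are the vertices of `P`, two of them being
adjacent exactly when the segment joining them is an edge (1-dimensional face) of `P`. -/
def polytopeGraph {n : ℕ} (P : Set (Euc n)) :
    SimpleGraph {v : Euc n // IsVertexOf P v} where
  Adj x y := x ≠ y ∧ IsFaceOf P (segment ℝ (x : Euc n) (y : Euc n))
  symm := by
    constructor
    rintro x y ⟨hxy, hseg⟩
    refine ⟨hxy.symm ∘ Eq.symm ∘ Eq.symm, ?_⟩
    · rwa [segment_symm]
  loopless := by constructor; rintro x ⟨hxx, _⟩; exact hxx rfl

/-- `E(X, X̄)`: the set of edges of `G` with one endpoint in `X` and the other outside `X`. -/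
def cutEdges {V : Type*} (G : SimpleGraph V) (X : Set V) : Set (Sym2 V) :=
  {e | ∃ x y, G.Adj x y ∧ x ∈ X ∧ y ∉ X ∧ e = s(x, y)}

/-- An edge cut of `G`: a set of edges of the form `E(X, X̄)` for a nonempty proper
subset `X` of the vertices, whose removal separates two vertices of `G`. -/
def IsEdgeCut {V : Type*} (G : SimpleGraph V) (D : Set (Sym2 V)) : Prop :=
  ∃ X : Set V, X.Nonempty ∧ Xᶜ.Nonempty ∧ D = cutEdges G X ∧
    ∃ x y : V, ¬ (G.deleteEdges D).Reachable x y

/-- A minimum edge cut: an edge cut of least cardinality. -/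
def IsMinEdgeCut {V : Type*} (G : SimpleGraph V) (D : Set (Sym2 V)) : Prop :=
  IsEdgeCut G D ∧ ∀ D' : Set (Sym2 V), IsEdgeCut G D' → D.ncard ≤ D'.ncard

/-- A trivial edge cut: the set of all edges incident with a single vertex. -/
def IsTrivialEdgeCut {V : Type*} (G : SimpleGraph V) (D : Set (Sym2 V)) : Prop :=
  ∃ v : V, D = G.incidenceSet v

/-- `G` is `r`-edge-connected: no two vertices are separated by removing fewer than
`r` edges. -/
def EdgeConnectedGE {V : Type*} (G : SimpleGraph V) (r : ℕ) : Prop :=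
  ∀ D : Finset (Sym2 V), D.card < r →
    ∀ x y : V, (G.deleteEdges (D : Set (Sym2 V))).Reachable x y

/-- The set of vertices incident with an edge of `D`. -/
def cutVerts {V : Type*} (D : Set (Sym2 V)) : Set V :=
  {v | ∃ e ∈ D, v ∈ e}

/-- A graph with at least `d + 1` vertices is `d`-connected if removing any `d - 1`
vertices leaves a connected subgraph. -/
def IsKConnected {V : Type*} [Fintype V] (G : SimpleGraph V) (d : ℕ) : Prop :=
  d + 1 ≤ Fintype.card V ∧
    ∀ S : Set V, S.ncard = d - 1 → (G.induce (Sᶜ : Set V)).Connected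

/-
The crossing edges of `D` leave `X` through `A = X ∩ V(D)`. If `|A| < d`, then `G - A` is still
connected, so a vertex of `X \ A` could reach `X̄` in `G - A`, which is impossible since every
path from `X` to `X̄` uses an edge of `D`; hence `X = A` has fewer than `d` vertices. Then each
`x ∈ X` has at most `|X| - 1` neighbours inside `X` and at least `d` in all, hence at least two
outside, and summing shows that `D` is larger than the trivial cut at any `x ∈ X` as soon as
`|X| ≥ 2`; `|X| = 1` makes `D` trivial.
-/

section EdgeCuts

open Finset

variable {V : Type*} {G : SimpleGraph V}

lemma SimpleGraph.Reachable.exists_adj_mem_notMem {S : Set V} {u v : V} (h : G.Reachable u v)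
    (hu : u ∈ S) (hv : v ∉ S) : ∃ p q, G.Adj p q ∧ p ∈ S ∧ q ∉ S :=
  let ⟨w⟩ := h
  let ⟨e, _, he⟩ := w.exists_boundary_dart S hu hv
  ⟨e.fst, e.snd, e.adj, he⟩

lemma cutEdges_compl (G : SimpleGraph V) (X : Set V) : cutEdges G Xᶜ = cutEdges G X := by
  ext e
  constructor <;>
  · rintro ⟨x, y, hadj, hx, hy, rfl⟩
    exact ⟨y, x, hadj.symm, by simpa using hy, by simpa using hx, Sym2.eq_swap⟩

lemma cutEdges_singleton (G : SimpleGraph V) (a : V) :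
    cutEdges G {a} = G.incidenceSet a := by
  ext e
  induction e using Sym2.ind with
  | _ x y =>
  constructor
  · rintro ⟨x', y', hadj, rfl, -, he⟩
    rw [he]
    exact ⟨hadj, Sym2.mem_mk_left _ _⟩
  · rintro ⟨hadj, hae⟩
    rcases Sym2.mem_iff.mp hae with rfl | rfl
    · exact ⟨a, y, hadj, rfl, hadj.ne', rfl⟩
    · exact ⟨a, x, hadj.symm, rfl, hadj.ne, Sym2.eq_swap⟩

lemma SimpleGraph.ncard_incidenceSet (G : SimpleGraph V) (a : V) :
    (G.incidenceSet a).ncard = (G.neighborSet a).ncard := by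
  classical exact Nat.card_congr (G.incidenceSetEquivNeighborSet a)

lemma left_mem_cutVerts_cutEdges {X : Set V} {p q : V} (hpq : G.Adj p q) (hp : p ∈ X)
    (hq : q ∉ X) : p ∈ cutVerts (cutEdges G X) :=
  ⟨s(p, q), ⟨p, q, hpq, hp, hq, rfl⟩, Sym2.mem_mk_left _ _⟩

lemma isEdgeCut_cutEdges {X : Set V} (hX : X.Nonempty) (hXc : Xᶜ.Nonempty) :
    IsEdgeCut G (cutEdges G X) := by
  obtain ⟨x, hx⟩ := hX
  obtain ⟨y, hy⟩ := hXc
  refine ⟨X, ⟨x, hx⟩, ⟨y, hy⟩, rfl, x, y, fun hxy => ?_⟩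
  obtain ⟨p, q, hpq, hp, hq⟩ := hxy.exists_adj_mem_notMem hx hy
  rw [SimpleGraph.deleteEdges_adj] at hpq
  exact hpq.2 ⟨p, q, hpq.1, hp, hq, rfl⟩

lemma IsEdgeCut.nonempty {D : Set (Sym2 V)} (hG : G.Preconnected) (hD : IsEdgeCut G D) :
    D.Nonempty := by
  obtain ⟨-, -, -, -, x, y, hxy⟩ := hD
  rw [Set.nonempty_iff_ne_empty]
  rintro rfl
  exact hxy (by simpa using hG x y)

lemma SimpleGraph.card_interedges_eq_sum [DecidableRel G.Adj] (s t : Finset V) :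
    #(G.interedges s t) = ∑ x ∈ s, #{y ∈ t | G.Adj x y} := by
  simp only [SimpleGraph.interedges_def, Finset.card_filter, Finset.sum_product]

section Counting

variable [Fintype V]

lemma ncard_cutEdges_eq_sum (G : SimpleGraph V) (s : Finset V) :
    (cutEdges G s).ncard = ∑ x ∈ s, (G.neighborSet x \ s).ncard := by
  classical
  have hcut : cutEdges G s = (fun e : V × V => s(e.1, e.2)) '' ↑(G.interedges s sᶜ) := by
    ext e
    constructor
    · rintro ⟨x, y, hxy, hx, hy, rfl⟩
      exact ⟨(x, y), by simpa [SimpleGraph.mk_mem_interedges_iff] using ⟨hx, hy, hxy⟩, rfl⟩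
    · rintro ⟨⟨x, y⟩, hxy, rfl⟩
      simp only [Finset.mem_coe, SimpleGraph.mk_mem_interedges_iff, Finset.mem_compl] at hxy
      exact ⟨x, y, hxy.2.2, hxy.1, hxy.2.1, rfl⟩
  have hinj : Set.InjOn (fun e : V × V => s(e.1, e.2)) ↑(G.interedges s sᶜ) := by
    rintro ⟨x, y⟩ hxy ⟨x', y'⟩ hxy' he
    simp only [Finset.mem_coe, SimpleGraph.mk_mem_interedges_iff, Finset.mem_compl] at hxy hxy'
    rcases Sym2.eq_iff.mp he with ⟨rfl, rfl⟩ | ⟨rfl, rfl⟩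
    · rfl
    · exact absurd hxy.1 hxy'.2.1
  rw [hcut, hinj.ncard_image, Set.ncard_coe_finset, G.card_interedges_eq_sum]
  refine Finset.sum_congr rfl fun x _ => ?_
  rw [← Set.ncard_coe_finset]
  congr 1
  ext y
  simp [and_comm]

lemma ncard_neighborSet_le_ncard_diff_add {s : Finset V} {x : V} (hx : x ∈ s) :
    (G.neighborSet x).ncard ≤ (G.neighborSet x \ s).ncard + (#s - 1) := by
  classical
  calc (G.neighborSet x).ncard ≤ (G.neighborSet x \ s ∪ ↑(s.erase x)).ncard := by
        refine Set.ncard_le_ncard (fun y hy => ?_)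
        by_cases hys : y ∈ s
        · exact Or.inr (Finset.mem_erase.mpr ⟨(G.ne_of_adj hy).symm, hys⟩)
        · exact Or.inl ⟨hy, hys⟩
    _ ≤ (G.neighborSet x \ s).ncard + #(s.erase x) := by
        grw [Set.ncard_union_le, Set.ncard_coe_finset]
    _ = (G.neighborSet x \ s).ncard + (#s - 1) := by rw [Finset.card_erase_of_mem hx]

lemma ncard_neighborSet_lt_ncard_cutEdges {d : ℕ} (hdeg : ∀ v, d ≤ (G.neighborSet v).ncard)
    {s : Finset V} (hs : #s < d) (hs₂ : 2 ≤ #s) {a : V} (ha : a ∈ s) :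
    (G.neighborSet a).ncard < (cutEdges G s).ncard := by
  classical
  have hout : ∀ x ∈ s, 2 ≤ (G.neighborSet x \ s).ncard := fun x hx => by
    have := ncard_neighborSet_le_ncard_diff_add (G := G) hx
    have := hdeg x
    omega
  have hrest : 2 * (#s - 1) ≤ ∑ x ∈ s.erase a, (G.neighborSet x \ s).ncard := by
    rw [← Finset.card_erase_of_mem ha, mul_comm, ← smul_eq_mul]
    exact Finset.card_nsmul_le_sum _ _ _ fun x hx => hout x (Finset.mem_of_mem_erase hx)
  have ha' := ncard_neighborSet_le_ncard_diff_add (G := G) ha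
  rw [ncard_cutEdges_eq_sum, ← Finset.add_sum_erase _ _ ha]
  omega

end Counting

namespace IsKConnected

variable [Fintype V] {d : ℕ}

lemma preconnected_induce_compl (h : IsKConnected G d) {S : Set V} (hS : S.ncard < d) :
    (G.induce Sᶜ).Preconnected := by
  rintro ⟨u, hu⟩ ⟨v, hv⟩
  have huv : ({u, v} : Set V).ncard ≤ 2 := (Set.ncard_insert_le _ _).trans (by simp)
  obtain ⟨S', hSS', hS'uv, hS'⟩ := Set.exists_subsuperset_card_eq (t := {u, v}ᶜ)
    (by simpa [Set.subset_compl_iff_disjoint_right] using ⟨hu, hv⟩) (Nat.le_sub_one_of_lt hS)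
    (by rw [Set.ncard_compl, Nat.card_eq_fintype_card]; have := h.1; omega)
  have hu' : u ∉ S' := fun hu' => hS'uv hu' (by simp)
  have hv' : v ∉ S' := fun hv' => hS'uv hv' (by simp)
  exact ((h.2 S' hS').preconnected ⟨u, hu'⟩ ⟨v, hv'⟩).map
    (G.induceHomOfLE (Set.compl_subset_compl.mpr hSS')).toHom

lemma preconnected (h : IsKConnected G d) (hd : 0 < d) : G.Preconnected := fun u v => by
  simpa using ((h.preconnected_induce_compl (S := ∅) (by simpa using hd)) ⟨u, by simp⟩
    ⟨v, by simp⟩).map (SimpleGraph.Embedding.induce _).toHom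

lemma le_ncard_neighborSet (h : IsKConnected G d) (v : V) : d ≤ (G.neighborSet v).ncard := by
  by_contra! hlt
  have hsmall : (insert v (G.neighborSet v)).ncard < (Set.univ : Set V).ncard := by
    grw [Set.ncard_insert_le, Set.ncard_univ, Nat.card_eq_fintype_card, ← h.1]
    omega
  obtain ⟨w, -, hw⟩ := Set.exists_mem_notMem_of_ncard_lt_ncard hsmall
  -- a walk from `v` to `w` avoiding the neighbours of `v` cannot take its first step
  obtain ⟨p, q, hpq, hp, -⟩ := (h.preconnected_induce_compl hlt ⟨v, G.notMem_neighborSet_self⟩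
    ⟨w, fun hvw => hw (.inr hvw)⟩).exists_adj_mem_notMem (S := Subtype.val ⁻¹' {v}) rfl
    fun hwv => hw (.inl hwv)
  exact q.2 (by simpa [show (p : V) = v from hp] using hpq)

lemma subset_cutVerts_of_ncard_lt (h : IsKConnected G d) {X : Set V} (hXc : Xᶜ.Nonempty)
    (hlt : (X ∩ cutVerts (cutEdges G X)).ncard < d) : X ⊆ cutVerts (cutEdges G X) := by
  intro u hu
  by_contra hu'
  obtain ⟨b, hb⟩ := hXc
  obtain ⟨p, q, hpq, hp, hq⟩ := (h.preconnected_induce_compl hlt ⟨u, fun h' => hu' h'.2⟩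
    ⟨b, fun h' => hb h'.1⟩).exists_adj_mem_notMem (S := Subtype.val ⁻¹' X) hu hb
  exact p.2 ⟨hp, left_mem_cutVerts_cutEdges hpq hp hq⟩

lemma le_ncard_inter_cutVerts (h : IsKConnected G d) {X : Set V}
    (hmin : IsMinEdgeCut G (cutEdges G X)) (hnt : ¬ IsTrivialEdgeCut G (cutEdges G X)) :
    d ≤ (X ∩ cutVerts (cutEdges G X)).ncard := by
  by_contra! hlt
  obtain ⟨-, ⟨a, b, -, ha, hb, -⟩⟩ := hmin.1.nonempty (h.preconnected (by omega))
  rw [Set.inter_eq_left.mpr (h.subset_cutVerts_of_ncard_lt ⟨b, hb⟩ hlt)] at hlt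
  obtain ⟨s, rfl⟩ : ∃ s : Finset V, ↑s = X := ⟨X.toFinite.toFinset, by simp⟩
  rw [Set.ncard_coe_finset] at hlt
  obtain hs | hs : #s = 1 ∨ 2 ≤ #s := by
    have := Finset.card_pos.mpr ⟨a, ha⟩
    omega
  · obtain ⟨c, rfl⟩ := Finset.card_eq_one.mp hs
    exact hnt ⟨c, by rw [Finset.coe_singleton, cutEdges_singleton]⟩
  · have hcut := ncard_neighborSet_lt_ncard_cutEdges h.le_ncard_neighborSet hlt hs ha
    have hmin_a := hmin.2 _ (isEdgeCut_cutEdges (Set.singleton_nonempty a)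
      ⟨b, fun hba => hb (by rwa [Set.mem_singleton_iff.mp hba])⟩)
    rw [cutEdges_singleton, G.ncard_incidenceSet] at hmin_a
    omega

end IsKConnected

end EdgeCuts

/-- If `G` is a `d`-connected graph and `D = E(X, X̄)` is a nontrivial
minimum edge cut of `G`, then at least `d` vertices of `X` and at least `d` vertices of
`V(G) ∖ X` are incident with edges of `D`. -/
theorem edge_cut_small {V : Type*} [Fintype V] (G : SimpleGraph V) (d : ℕ)
    (hconn : IsKConnected G d)
    (X : Set V) (D : Set (Sym2 V)) (hDX : D = cutEdges G X)
    (hmin : IsMinEdgeCut G D) (hnt : ¬ IsTrivialEdgeCut G D) :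
    d ≤ (X ∩ cutVerts D).ncard ∧ d ≤ (Xᶜ ∩ cutVerts D).ncard := by
  subst hDX
  refine ⟨hconn.le_ncard_inter_cutVerts hmin hnt, ?_⟩
  rw [← cutEdges_compl] at hmin hnt ⊢
  exact hconn.le_ncard_inter_cutVerts hmin hnt

end
end

section
/- Let d ≥ 4, let G be a graph, and let D = E(X, X̄) be an edge cut of G with |D| ≤ 4d − 7 such that at least d vertices of X are incident with edges of D and at least d vertices of V(G)∖X are incident with edges of D. Then there is a vertex w ∈ X incident with an edge of D such that w has at least 1 and at most d − 2 neighbours in V(G)∖X; similarly, there is a vertex z ∈ V(G)∖X incident with an edge of D such that z has at least 1 and at most d − 2 neighbours in X. -/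
noncomputable section

/-! Every vertex of `X` incident with `D = E(X, X̄)` has at least one neighbour across the cut, so
if none had between `1` and `d - 2` of them, each of the at least `d` such vertices would
contribute at least `d - 1` edges of `D`, and `|D| ≥ d (d - 1) > 4d - 7`. The other side follows
by symmetry, as `E(X̄, X) = E(X, X̄)`. -/

namespace cutEdges

variable {V : Type*} (G : SimpleGraph V)

lemma compl_eq (X : Set V) : cutEdges G Xᶜ = cutEdges G X := by
  ext e
  constructor <;> rintro ⟨x, y, hxy, hx, hy, rfl⟩
  · exact ⟨y, x, hxy.symm, not_not.mp hy, hx, Sym2.eq_swap⟩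
  · exact ⟨y, x, hxy.symm, hy, not_not.mpr hx, Sym2.eq_swap⟩

variable {G}

lemma neighborSet_inter_compl_nonempty {X : Set V} {w : V}
    (hw : w ∈ X ∩ cutVerts (cutEdges G X)) : (G.neighborSet w ∩ Xᶜ).Nonempty := by
  obtain ⟨hwX, e, ⟨x, y, hxy, hx, hy, rfl⟩, hwe⟩ := hw
  rcases Sym2.mem_iff.mp hwe with rfl | rfl
  · exact ⟨y, hxy, hy⟩
  · exact absurd hwX hy

lemma eq_and_eq_of_mk_eq_mk {X : Set V} {x x' y y' : V} (hx : x ∈ X) (hx' : x' ∈ X)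
    (hy' : y' ∉ X) (h : s(x, y) = s(x', y')) : x = x' ∧ y = y' := by
  rcases Sym2.eq_iff.mp h with h | ⟨rfl, rfl⟩
  · exact h
  · exact absurd hx hy'

variable (G)

lemma sum_ncard_neighborSet_inter_compl_le [Finite V] (X : Set V) (S : Finset V)
    (hS : ↑S ⊆ X) : ∑ w ∈ S, (G.neighborSet w ∩ Xᶜ).ncard ≤ (cutEdges G X).ncard := by
  classical
  have := Fintype.ofFinite V
  let T : Finset (Σ _ : V, V) := S.sigma fun w ↦ (G.neighborSet w ∩ Xᶜ).toFinset
  have hT : ∀ p ∈ T, p.1 ∈ X ∧ G.Adj p.1 p.2 ∧ p.2 ∉ X := by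
    intro p hp
    simp only [T, Finset.mem_sigma, Set.mem_toFinset, Set.mem_inter_iff,
      SimpleGraph.mem_neighborSet, Set.mem_compl_iff] at hp
    exact ⟨hS hp.1, hp.2⟩
  have hinj : Set.InjOn (fun p : Σ _ : V, V ↦ s(p.1, p.2)) T := by
    rintro ⟨x, y⟩ hp ⟨x', y'⟩ hp' h
    obtain ⟨hx, -, -⟩ := hT _ hp
    obtain ⟨hx', -, hy'⟩ := hT _ hp'
    obtain ⟨rfl, rfl⟩ := eq_and_eq_of_mk_eq_mk hx hx' hy' h
    rfl
  calc ∑ w ∈ S, (G.neighborSet w ∩ Xᶜ).ncard = T.card := by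
        simp only [T, Finset.card_sigma, Set.ncard_eq_toFinset_card']
    _ = (T.image fun p ↦ s(p.1, p.2)).card := (Finset.card_image_of_injOn hinj).symm
    _ ≤ (cutEdges G X).ncard := by
        rw [← Set.ncard_coe_finset]
        refine Set.ncard_le_ncard ?_ (Set.toFinite _)
        intro e he
        obtain ⟨⟨x, y⟩, hp, rfl⟩ := Finset.mem_image.mp he
        obtain ⟨hx, hxy, hy⟩ := hT _ hp
        exact ⟨x, y, hxy, hx, hy, rfl⟩

lemma ncard_inter_cutVerts_mul_le [Finite V] {X : Set V} {k : ℕ}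
    (hk : ∀ w ∈ X ∩ cutVerts (cutEdges G X), k ≤ (G.neighborSet w ∩ Xᶜ).ncard) :
    (X ∩ cutVerts (cutEdges G X)).ncard * k ≤ (cutEdges G X).ncard := by
  set S := (Set.toFinite (X ∩ cutVerts (cutEdges G X))).toFinset
  calc (X ∩ cutVerts (cutEdges G X)).ncard * k = ∑ _w ∈ S, k := by
        rw [Finset.sum_const, smul_eq_mul, Set.ncard_eq_toFinset_card _ (Set.toFinite _)]
    _ ≤ ∑ w ∈ S, (G.neighborSet w ∩ Xᶜ).ncard :=
        Finset.sum_le_sum fun w hw ↦ hk w ((Set.Finite.mem_toFinset _).mp hw)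
    _ ≤ (cutEdges G X).ncard :=
        sum_ncard_neighborSet_inter_compl_le G X S fun w hw ↦
          ((Set.Finite.mem_toFinset _).mp hw).1

lemma exists_mem_cutVerts_ncard_neighborSet_inter_compl_le [Finite V] {X : Set V} {d : ℕ}
    (hd : 4 ≤ d) (hcard : (cutEdges G X).ncard ≤ 4 * d - 7)
    (hX : d ≤ (X ∩ cutVerts (cutEdges G X)).ncard) :
    ∃ w ∈ X ∩ cutVerts (cutEdges G X),
      1 ≤ (G.neighborSet w ∩ Xᶜ).ncard ∧ (G.neighborSet w ∩ Xᶜ).ncard ≤ d - 2 := by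
  by_contra! hfew
  have hdeg : ∀ w ∈ X ∩ cutVerts (cutEdges G X), d - 1 ≤ (G.neighborSet w ∩ Xᶜ).ncard := by
    intro w hw
    have hpos := (Set.ncard_pos (Set.toFinite _)).mpr (neighborSet_inter_compl_nonempty hw)
    have := hfew w hw hpos
    omega
  have hbig : 4 * (d - 1) ≤ (cutEdges G X).ncard :=
    calc 4 * (d - 1) ≤ d * (d - 1) := Nat.mul_le_mul_right _ hd
      _ ≤ (X ∩ cutVerts (cutEdges G X)).ncard * (d - 1) := Nat.mul_le_mul_right _ hX
      _ ≤ (cutEdges G X).ncard := ncard_inter_cutVerts_mul_le G hdeg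
  omega

end cutEdges

theorem exists_vertex_few_cross_neighbours_general {V : Type*} [Fintype V]
    (G : SimpleGraph V) (d : ℕ) (hd : 4 ≤ d)
    (X : Set V) (D : Set (Sym2 V)) (hDX : D = cutEdges G X)
    (hcard : D.ncard ≤ 4 * d - 7)
    (hX : d ≤ (X ∩ cutVerts D).ncard) (hXc : d ≤ (Xᶜ ∩ cutVerts D).ncard) :
    (∃ w ∈ X ∩ cutVerts D,
      1 ≤ (G.neighborSet w ∩ Xᶜ).ncard ∧ (G.neighborSet w ∩ Xᶜ).ncard ≤ d - 2) ∧
    (∃ z ∈ Xᶜ ∩ cutVerts D,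
      1 ≤ (G.neighborSet z ∩ X).ncard ∧ (G.neighborSet z ∩ X).ncard ≤ d - 2) := by
  subst hDX
  refine ⟨cutEdges.exists_mem_cutVerts_ncard_neighborSet_inter_compl_le G hd hcard hX, ?_⟩
  rw [← cutEdges.compl_eq G X] at hcard hXc ⊢
  simpa only [compl_compl] using
    cutEdges.exists_mem_cutVerts_ncard_neighborSet_inter_compl_le G hd hcard hXc

/-- Let `d ≥ 4` and let `D = E(X, X̄)` be an edge cut of a finite graph `G`
with `|D| ≤ 4d - 7` such that at least `d` vertices of `X` and at least `d` vertices of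
`V(G) ∖ X` are incident with edges of `D`. Then some vertex `w ∈ X` incident with an edge
of `D` has at least `1` and at most `d - 2` neighbours in `V(G) ∖ X`, and some vertex
`z ∈ V(G) ∖ X` incident with an edge of `D` has at least `1` and at most `d - 2`
neighbours in `X`. -/
theorem exists_vertex_few_cross_neighbours {V : Type*} [Fintype V]
    (G : SimpleGraph V) (d : ℕ) (hd : 4 ≤ d)
    (X : Set V) (D : Set (Sym2 V)) (hDX : D = cutEdges G X)
    (hcut : IsEdgeCut G D) (hcard : D.ncard ≤ 4 * d - 7)
    (hX : d ≤ (X ∩ cutVerts D).ncard) (hXc : d ≤ (Xᶜ ∩ cutVerts D).ncard) :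
    (∃ w ∈ X ∩ cutVerts D,
      1 ≤ (G.neighborSet w ∩ Xᶜ).ncard ∧ (G.neighborSet w ∩ Xᶜ).ncard ≤ d - 2) ∧
    (∃ z ∈ Xᶜ ∩ cutVerts D,
      1 ≤ (G.neighborSet z ∩ X).ncard ∧ (G.neighborSet z ∩ X).ncard ≤ d - 2) :=
  exists_vertex_few_cross_neighbours_general G d hd X D hDX hcard hX hXc

end
end
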